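/- arXiv:2205.12884 — 2 statements merged into one kernel-verified Lean document; each statement's English description precedes it below -/
import Mathlib

section
/- For a positive odd integer j, a positive integer k with j not dividing 2k, and any real r < 0, (2/π)∫₀^π H(r sin(jx)) sin²(kx) dx = (1/2)·[1 - 1/j + tan(kπ/j)/(kπ)], where H is the Heaviside function. -/
/-!
For `r < 0` the integrand is `sin (k x) ^ 2` exactly where `sin (j x) < 0`, i.e. on the
intervals `(i π / j, (i + 1) π / j)` with `i` odd. Integrating the primitive
`x / 2 - sin (2 k x) / (4 k)` over these and summing by parts (`j` odd) leaves two alternating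
sums: `∑ (-1)^i i = (j - 1) / 2`, and `∑ (-1)^i sin (2 i θ)` with `θ = k π / j`, which telescopes
after multiplication by `2 cos θ` to `-tan θ`; here `cos θ ≠ 0` because `j ∤ 2 k`.
-/

open Real Finset intervalIntegral MeasureTheory

lemma cos_natCast_mul_pi_div_natCast_ne_zero {j k : ℕ} (h : ¬ j ∣ 2 * k) :
    cos (k * π / j) ≠ 0 := by
  rcases eq_or_ne j 0 with rfl | hj
  · simp
  rw [cos_ne_zero_iff]
  intro n hn
  have hj' : (j : ℝ) ≠ 0 := by exact_mod_cast hj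
  have hreal : ((2 * k : ℕ) : ℝ) = j * (2 * n + 1) := by
    field_simp at hn
    push_cast
    linarith [pi_pos]
  exact h (Int.natCast_dvd_natCast.mp ⟨2 * n + 1, by exact_mod_cast hreal⟩)

lemma two_mul_cos_mul_sum_neg_one_pow_mul_sin (θ : ℝ) (N : ℕ) :
    2 * cos θ * ∑ n ∈ range N, (-1) ^ n * sin (2 * n * θ)
      = (-1) ^ (N + 1) * sin ((2 * N - 1) * θ) - sin θ := by
  induction N with
  | zero => simp [neg_mul, sin_neg]
  | succ N ih =>
    rw [sum_range_succ, mul_add, ih]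
    push_cast
    rw [show (2 * (N + 1 : ℝ) - 1) * θ = 2 * N * θ + θ by ring,
      show (2 * (N : ℝ) - 1) * θ = 2 * N * θ - θ by ring, sin_add, sin_sub]
    ring

lemma Odd.sum_range_neg_one_pow_mul_sin_two_mul {j k : ℕ} (hj : Odd j) {θ : ℝ}
    (hθ : j * θ = k * π) (hc : cos θ ≠ 0) :
    ∑ n ∈ range j, (-1) ^ n * sin (2 * n * θ) = -tan θ := by
  have hsin : sin ((2 * j - 1) * θ) = -sin θ := by
    rw [show (2 * j - 1) * θ = -θ + (2 * k : ℕ) * π by push_cast; linarith,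
      sin_add_nat_mul_pi, (even_two_mul k).neg_one_pow, one_mul, sin_neg]
  have h := two_mul_cos_mul_sum_neg_one_pow_mul_sin θ j
  rw [hsin, hj.add_one.neg_one_pow] at h
  rw [tan_eq_sin_div_cos]
  field_simp
  linarith

lemma Odd.sum_range_neg_one_pow_mul_natCast {j : ℕ} (hj : Odd j) :
    ∑ i ∈ range j, (-1 : ℝ) ^ i * i = (j - 1) / 2 := by
  obtain ⟨m, rfl⟩ := hj
  induction m with
  | zero => simp
  | succ m ih =>
    rw [show 2 * (m + 1) + 1 = 2 * m + 1 + 1 + 1 by ring, sum_range_succ _ (2 * m + 1 + 1),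
      sum_range_succ _ (2 * m + 1), ih]
    simp only [pow_succ, pow_mul]
    push_cast
    ring

lemma Odd.sum_range_ite_odd_sub {R : Type*} [CommRing R] {j : ℕ} (hj : Odd j) (f : ℕ → R) :
    ∑ i ∈ range j, (if Odd i then f (i + 1) - f i else 0)
      = ∑ i ∈ range j, (-1) ^ i * f i - f 0 := by
  obtain ⟨m, rfl⟩ := hj
  induction m with
  | zero => simp
  | succ m ih =>
    rw [show 2 * (m + 1) + 1 = 2 * m + 1 + 1 + 1 by ring, sum_range_succ _ (2 * m + 1 + 1),
      sum_range_succ _ (2 * m + 1), sum_range_succ _ (2 * m + 1 + 1),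
      sum_range_succ _ (2 * m + 1), ih, if_pos (odd_two_mul_add_one m),
      if_neg (Nat.not_odd_iff_even.2 (odd_two_mul_add_one m).add_one)]
    simp only [pow_succ, pow_mul]
    ring

lemma neg_one_pow_mul_sin_pos {i : ℕ} {y : ℝ} (h₁ : i * π < y) (h₂ : y < (i + 1) * π) :
    0 < (-1) ^ i * sin y := by
  rw [← sin_sub_nat_mul_pi]
  exact sin_pos_of_pos_of_lt_pi (by linarith) (by linarith)

lemma integral_sin_mul_sq {k : ℝ} (hk : k ≠ 0) (a b : ℝ) :
    ∫ x in a..b, sin (k * x) ^ 2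
      = (b / 2 - sin (2 * k * b) / (4 * k)) - (a / 2 - sin (2 * k * a) / (4 * k)) := by
  rw [integral_comp_mul_left (fun x => sin x ^ 2) hk, integral_sin_sq, smul_eq_mul,
    mul_assoc 2 k b, mul_assoc 2 k a, sin_two_mul, sin_two_mul]
  field_simp
  ring

lemma integral_ite_sin_neg_mul {j : ℕ} (hj : 0 < j) (i : ℕ) (f : ℝ → ℝ) :
    ∫ x in i * π / j..↑(i + 1) * π / j, (if sin (j * x) < 0 then 1 else 0) * f x
      = if Odd i then ∫ x in i * π / j..↑(i + 1) * π / j, f x else 0 := by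
  have hj' : (0 : ℝ) < j := by exact_mod_cast hj
  have hle : i * π / j ≤ ↑(i + 1) * π / j := by gcongr; simp
  have hsign : ∀ x ∈ Set.Ioo (i * π / j) (↑(i + 1) * π / j), 0 < (-1) ^ i * sin (j * x) := by
    rintro x ⟨h₁, h₂⟩
    rw [div_lt_iff₀ hj'] at h₁
    rw [lt_div_iff₀ hj'] at h₂
    push_cast at h₂
    exact neg_one_pow_mul_sin_pos (by linarith) (by linarith)
  split_ifs with hi
  · refine integral_congr_Ioo_of_le hle fun x hx => ?_
    have h := hsign x hx
    rw [hi.neg_one_pow] at h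
    simp [show sin (j * x) < 0 by linarith]
  · refine (integral_congr_Ioo_of_le hle fun x hx => ?_).trans integral_zero
    have h := hsign x hx
    rw [(Nat.not_odd_iff_even.1 hi).neg_one_pow, one_mul] at h
    simp [h.not_gt]

lemma integral_ite_sin_neg_mul_eq_sum {j : ℕ} (hj : 0 < j) {f : ℝ → ℝ} (hf : Continuous f) :
    ∫ x in 0..π, (if sin (j * x) < 0 then 1 else 0) * f x
      = ∑ i ∈ range j, if Odd i then ∫ x in i * π / j..↑(i + 1) * π / j, f x else 0 := by
  have hS : MeasurableSet {x : ℝ | sin (j * x) < 0} :=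
    measurableSet_lt (by fun_prop) measurable_const
  have hint (a b : ℝ) :
      IntervalIntegrable (fun x => (if sin (j * x) < 0 then 1 else 0) * f x) volume a b := by
    rw [intervalIntegrable_iff]
    convert ((hf.intervalIntegrable (μ := volume) a b).def'.indicator hS) using 1
    ext x
    by_cases h : sin (j * x) < 0 <;> simp [Set.indicator, h]
  have hj' : (j : ℝ) ≠ 0 := by exact_mod_cast hj.ne'
  have hsplit := sum_integral_adjacent_intervals (a := fun i : ℕ => i * π / j) (n := j)
    fun i _ => hint _ _
  rw [Nat.cast_zero, zero_mul, zero_div, mul_div_cancel_left₀ π hj'] at hsplit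
  rw [← hsplit]
  exact sum_congr rfl fun i _ => integral_ite_sin_neg_mul hj i f

theorem stmt7_general (j k : ℕ) (hjo : Odd j) (hdvd : ¬ (j ∣ 2 * k))
    (r : ℝ) (hr : r < 0) :
    (2 / π) * ∫ x in (0:ℝ)..π,
        (if 0 < r * Real.sin (j * x) then (1:ℝ) else 0) * Real.sin (k * x) ^ 2
      = (1 / 2) * (1 - 1 / j + Real.tan (k * π / j) / (k * π)) := by
  have hj : (j : ℝ) ≠ 0 := by exact_mod_cast hjo.pos.ne'
  have hk : (k : ℝ) ≠ 0 := Nat.cast_ne_zero.2 (by rintro rfl; simp at hdvd)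
  have hcos := cos_natCast_mul_pi_div_natCast_ne_zero hdvd
  simp_rw [← smul_eq_mul r, smul_pos_iff_of_neg_left hr]
  rw [integral_ite_sin_neg_mul_eq_sum hjo.pos (by fun_prop)]
  simp_rw [integral_sin_mul_sq hk]
  rw [hjo.sum_range_ite_odd_sub fun i : ℕ => i * π / j / 2 - sin (2 * k * (i * π / j)) / (4 * k)]
  have hsum :
      ∑ i ∈ range j, (-1) ^ i * ((i : ℝ) * π / j / 2 - sin (2 * k * (i * π / j)) / (4 * k))
        = π / (2 * j) * ∑ i ∈ range j, (-1 : ℝ) ^ i * i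
          - 1 / (4 * k) * ∑ i ∈ range j, (-1) ^ i * sin (2 * i * (k * π / j)) := by
    rw [mul_sum, mul_sum, ← sum_sub_distrib]
    refine sum_congr rfl fun i _ => ?_
    rw [show 2 * (k : ℝ) * (i * π / j) = 2 * i * (k * π / j) by ring]
    ring
  rw [hsum, hjo.sum_range_neg_one_pow_mul_natCast,
    hjo.sum_range_neg_one_pow_mul_sin_two_mul (k := k) (θ := k * π / j) (by field_simp) hcos]
  simp only [Nat.cast_zero, zero_mul, zero_div, mul_zero, sin_zero]
  field_simp
  ring

theorem stmt7 (j k : ℕ) (hj : 0 < j) (hjo : Odd j) (hk : 0 < k) (hdvd : ¬ (j ∣ 2 * k))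
    (r : ℝ) (hr : r < 0) :
    (2 / π) * ∫ x in (0:ℝ)..π,
        (if 0 < r * Real.sin (j * x) then (1:ℝ) else 0) * Real.sin (k * x) ^ 2
      = (1 / 2) * (1 - 1 / j + Real.tan (k * π / j) / (k * π)) :=
  stmt7_general j k hjo hdvd r hr
end

section
/- For a positive odd integer j and any real r, (2/π)∫₀^π (r sin(jx))⁺ sin(jx) dx = (1/2)·(1 + sign(r)/j)·r, where s⁺ = max(s,0) and sign(r) ∈ {-1,0,1} is the sign of r. -/
/-!
Writing `max s 0 = (s + |s|) / 2`, the integrand is `(r/2) sin² (jx) + (|r|/2) sin (jx) |sin (jx)|`.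
The first part integrates to `π/2`. After substituting `t = jx` the second becomes
`(1/j) ∫₀^{jπ} sin t |sin t|`; since `sin t |sin t|` is `π`-antiperiodic, consecutive half-periods
cancel in pairs and for odd `j` only `∫₀^π sin² = π/2` survives. Finally `|r| = sign r * r`.
-/

open Real intervalIntegral
open MeasureTheory (volume)

namespace Function.Antiperiodic

variable {E : Type*} [NormedAddCommGroup E] [NormedSpace ℝ E] {f : ℝ → E} {T : ℝ}

theorem intervalIntegral_add_two_mul_eq_zero (hf : Antiperiodic f T)
    (hint : ∀ a b, IntervalIntegrable f volume a b) (t : ℝ) :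
    ∫ x in t..t + 2 * T, f x = 0 := by
  have hsecond : ∫ x in t + T..t + 2 * T, f x = -∫ x in t..t + T, f x := by
    rw [← integral_neg, show t + 2 * T = t + T + T by ring,
      ← integral_comp_add_right]
    simp only [hf _]
  rw [← integral_add_adjacent_intervals (hint t (t + T)) (hint _ _), hsecond, add_neg_cancel]

theorem intervalIntegral_add_odd_mul_eq (hf : Antiperiodic f T)
    (hint : ∀ a b, IntervalIntegrable f volume a b) {n : ℕ} (hn : Odd n) (t : ℝ) :
    ∫ x in t..t + n * T, f x = ∫ x in t..t + T, f x := by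
  obtain ⟨k, rfl⟩ := hn
  induction k with
  | zero => simp
  | succ k ih =>
    have hstep : t + ↑(2 * (k + 1) + 1) * T = t + ↑(2 * k + 1) * T + 2 * T := by push_cast; ring
    rw [← integral_add_adjacent_intervals (hint _ _) (hint _ _), ih, hstep,
      hf.intervalIntegral_add_two_mul_eq_zero hint, add_zero]

end Function.Antiperiodic

section LinearOrderedField

variable {α : Type*} [Field α] [LinearOrder α] [IsStrictOrderedRing α]

theorem max_zero_eq_add_abs_div_two (a : α) : max a 0 = (a + |a|) / 2 := by
  rw [add_abs_eq_two_nsmul_posPart]; simp [posPart_def]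

theorem max_mul_zero_mul_self (r s : α) :
    max (r * s) 0 * s = r / 2 * s ^ 2 + |r| / 2 * (s * |s|) := by
  rw [max_zero_eq_add_abs_div_two, abs_mul]; ring

end LinearOrderedField

theorem Real.abs_eq_sign_mul_self (r : ℝ) : |r| = Real.sign r * r := by
  rcases lt_trichotomy r 0 with h | rfl | h
  · rw [abs_of_neg h, Real.sign_of_neg h]; ring
  · simp
  · rw [abs_of_pos h, Real.sign_of_pos h]; ring

theorem antiperiodic_sin_mul_abs_sin : Function.Antiperiodic (fun x => sin x * |sin x|) π := by
  intro x; simp only [sin_antiperiodic x, abs_neg, neg_mul]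

theorem integral_sin_mul_abs_sin_zero_pi : ∫ x in (0 : ℝ)..π, sin x * |sin x| = π / 2 := by
  have hsq : ∫ x in (0 : ℝ)..π, sin x * |sin x| = ∫ x in (0 : ℝ)..π, sin x ^ 2 := by
    refine integral_congr fun x hx => ?_
    rw [Set.uIcc_of_le pi_pos.le] at hx
    simp only [abs_of_nonneg (sin_nonneg_of_nonneg_of_le_pi hx.1 hx.2), sq]
  simp [hsq, integral_sin_sq]

theorem integral_sin_nat_mul_sq {j : ℕ} (hj : j ≠ 0) :
    ∫ x in (0 : ℝ)..π, sin (j * x) ^ 2 = π / 2 := by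
  have hj' : (j : ℝ) ≠ 0 := Nat.cast_ne_zero.mpr hj
  rw [integral_comp_mul_left (fun t => sin t ^ 2) hj', integral_sin_sq, mul_zero, sin_zero,
    sin_nat_mul_pi, smul_eq_mul]
  field_simp
  ring

theorem integral_sin_nat_mul_mul_abs_sin_nat_mul {j : ℕ} (hj : Odd j) :
    ∫ x in (0 : ℝ)..π, sin (j * x) * |sin (j * x)| = π / (2 * j) := by
  have hj' : (j : ℝ) ≠ 0 := Nat.cast_ne_zero.mpr hj.pos.ne'
  have hint : ∀ a b, IntervalIntegrable (fun x => sin x * |sin x|) volume a b := fun a b =>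
    (by fun_prop : Continuous fun x => sin x * |sin x|).intervalIntegrable a b
  rw [integral_comp_mul_left (fun t => sin t * |sin t|) hj', mul_zero,
    ← zero_add ((j : ℝ) * π), antiperiodic_sin_mul_abs_sin.intervalIntegral_add_odd_mul_eq hint hj,
    zero_add, integral_sin_mul_abs_sin_zero_pi, smul_eq_mul]
  field_simp

theorem stmt9_general (j : ℕ) (hjo : Odd j) (r : ℝ) :
    (2 / π) * ∫ x in (0:ℝ)..π, max (r * Real.sin (j * x)) 0 * Real.sin (j * x)
      = (1 / 2) * (1 + Real.sign r / j) * r := by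
  calc (2 / π) * ∫ x in (0:ℝ)..π, max (r * sin (j * x)) 0 * sin (j * x)
      = (2 / π) * ((r / 2) * ∫ x in (0:ℝ)..π, sin (j * x) ^ 2) +
          (2 / π) * ((|r| / 2) * ∫ x in (0:ℝ)..π, sin (j * x) * |sin (j * x)|) := by
        simp only [max_mul_zero_mul_self]
        rw [integral_add (Continuous.intervalIntegrable (by fun_prop) _ _)
          (Continuous.intervalIntegrable (by fun_prop) _ _),
          integral_const_mul, integral_const_mul, mul_add]
    _ = (1 / 2) * (1 + Real.sign r / j) * r := by
        rw [integral_sin_nat_mul_sq hjo.pos.ne', integral_sin_nat_mul_mul_abs_sin_nat_mul hjo,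
          Real.abs_eq_sign_mul_self]
        field_simp

theorem stmt9 (j : ℕ) (hj : 0 < j) (hjo : Odd j) (r : ℝ) :
    (2 / π) * ∫ x in (0:ℝ)..π, max (r * Real.sin (j * x)) 0 * Real.sin (j * x)
      = (1 / 2) * (1 + Real.sign r / j) * r :=
  stmt9_general j hjo r
end
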